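/- Let ω be a positive integer, f : ℝ≥0 × X → X continuous, uniformly S-asymptotically ω-periodic on bounded sets and globally Lipschitz in the second variable with constant L. If u : ℝ≥0 → X is bounded continuous S-asymptotically ω-periodic, then the function v(t) = f(t, u(⌊t⌋)) is S-asymptotically ω-periodic in the Stepanov sense with exponent p ≥ 1: lim_{t→∞} ∫_t^{t+1} ‖v(s+ω) - v(s)‖^p ds = 0. -/

import Mathlib

/-!
The integrand `‖f (s + ω) (u ⌊s + ω⌋) - f s (u ⌊s⌋)‖` tends to `0` as `s → ∞`: since
`⌊s + ω⌋ = ⌊s⌋ + ω`, it splits into `f (s + ω) (u (⌊s⌋ + ω)) - f (s + ω) (u ⌊s⌋)`, which is at most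
`L ‖u (⌊s⌋ + ω) - u ⌊s⌋‖`, and `f (s + ω) (u ⌊s⌋) - f s (u ⌊s⌋)`, which is small uniformly on the
bounded range of `u`. Its `p`-th power then tends to `0` as well, and so do its integrals over
intervals of length one.
-/

open Filter MeasureTheory Topology

theorem tendsto_intervalIntegral_add_of_tendsto_zero {E : Type*} [NormedAddCommGroup E]
    [NormedSpace ℝ E] {g : ℝ → E} (hg : Tendsto g atTop (𝓝 0)) (c : ℝ) :
    Tendsto (fun t => ∫ s in t..(t + c), g s) atTop (𝓝 0) := by
  rw [NormedAddGroup.tendsto_nhds_zero]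
  intro ε hε
  have hδ : 0 < ε / (|c| + 1) := by positivity
  obtain ⟨T, hT⟩ := eventually_atTop.1 ((NormedAddGroup.tendsto_nhds_zero.1 hg) _ hδ)
  filter_upwards [eventually_ge_atTop (T + |c|)] with t ht
  have hbound : ∀ s ∈ Set.uIoc t (t + c), ‖g s‖ ≤ ε / (|c| + 1) := by
    intro s hs
    have hsT : T ≤ s := by
      rcases Set.mem_uIoc.1 hs with ⟨h, -⟩ | ⟨h, -⟩ <;> linarith [neg_abs_le c, abs_nonneg c]
    exact (hT s hsT).le
  calc ‖∫ s in t..(t + c), g s‖ ≤ ε / (|c| + 1) * |t + c - t| :=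
        intervalIntegral.norm_integral_le_of_norm_le_const hbound
    _ = ε * (|c| / (|c| + 1)) := by rw [add_sub_cancel_left]; ring
    _ < ε := mul_lt_of_lt_one_right hε ((div_lt_one (by positivity)).2 (lt_add_one _))

theorem tendsto_sub_of_lipschitz_of_uniformly_close {α X Y : Type*} [SeminormedAddCommGroup X]
    [SeminormedAddCommGroup Y] {l : Filter α} {F G : α → X → Y} {K : Set X} {L : ℝ}
    {a b : α → X} (hlip : ∀ᶠ t in l, ∀ x y, ‖F t x - F t y‖ ≤ L * ‖x - y‖)
    (hclose : ∀ ε > 0, ∀ᶠ t in l, ∀ x ∈ K, ‖F t x - G t x‖ ≤ ε)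
    (ha : ∀ᶠ t in l, a t ∈ K) (hab : Tendsto (fun t => b t - a t) l (𝓝 0)) :
    Tendsto (fun t => F t (b t) - G t (a t)) l (𝓝 0) := by
  have hshift : Tendsto (fun t => F t (b t) - F t (a t)) l (𝓝 0) := by
    refine squeeze_zero_norm' ?_ (by simpa using (tendsto_norm_zero.comp hab).const_mul L)
    filter_upwards [hlip] with t ht using ht _ _
  have hdiff : Tendsto (fun t => F t (a t) - G t (a t)) l (𝓝 0) := by
    refine NormedAddGroup.tendsto_nhds_zero.2 fun ε hε => ?_
    filter_upwards [hclose (ε / 2) (half_pos hε), ha] with t ht hat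
    exact (ht _ hat).trans_lt (half_lt_self hε)
  simpa using hshift.add hdiff

theorem stmt4_general {X : Type*} [NormedAddCommGroup X]
    (f : ℝ → X → X) (ω : ℕ) (L : ℝ) (p : ℝ) (hp : 1 ≤ p)
    (husap : ∀ K : Set X, Bornology.IsBounded K →
      (∃ C : ℝ, ∀ t : ℝ, 0 ≤ t → ∀ x ∈ K, ‖f t x‖ ≤ C) ∧
      (∀ ε > (0 : ℝ), ∃ T : ℝ, ∀ t ≥ T, ∀ x ∈ K,
        ‖f (t + (ω : ℝ)) x - f t x‖ ≤ ε))
    (hlip : ∀ t : ℝ, 0 ≤ t → ∀ x y : X, ‖f t x - f t y‖ ≤ L * ‖x - y‖)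
    (u : ℝ → X)
    (hbdd : ∃ C : ℝ, ∀ t : ℝ, 0 ≤ t → ‖u t‖ ≤ C)
    (hsap : Tendsto (fun t : ℝ => u (t + (ω : ℝ)) - u t) atTop (nhds 0)) :
    Tendsto (fun t : ℝ =>
        ∫ s in t..(t + 1),
          ‖f (s + (ω : ℝ)) (u ((⌊s + (ω : ℝ)⌋ : ℤ) : ℝ)) - f s (u ((⌊s⌋ : ℤ) : ℝ))‖ ^ p)
      atTop (nhds 0) := by
  obtain ⟨C, hC⟩ := hbdd
  obtain ⟨-, hper⟩ := husap _ (Metric.isBounded_closedBall (x := (0 : X)) (r := C))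
  have hfloor (s : ℝ) : ((⌊s + (ω : ℝ)⌋ : ℤ) : ℝ) = ((⌊s⌋ : ℤ) : ℝ) + ω := by
    rw [Int.floor_add_natCast]; push_cast; rfl
  have hdiff : Tendsto (fun s : ℝ => f (s + ω) (u (⌊s⌋ + ω)) - f s (u ⌊s⌋)) atTop (𝓝 0) := by
    refine tendsto_sub_of_lipschitz_of_uniformly_close (K := Metric.closedBall 0 C) (L := L) ?_
      (fun ε hε => eventually_atTop.2 (hper ε hε)) ?_
      (hsap.comp (tendsto_intCast_atTop_atTop.comp tendsto_floor_atTop))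
    · filter_upwards [eventually_ge_atTop 0] with s hs using hlip _ (by positivity)
    · filter_upwards [eventually_ge_atTop 0] with s hs
      simpa using hC _ (by exact_mod_cast Int.floor_nonneg.2 hs)
  simp_rw [hfloor]
  exact tendsto_intervalIntegral_add_of_tendsto_zero
    ((tendsto_norm_zero.comp hdiff).rpow_const_nhds_zero (by linarith)) 1

theorem stmt4 {X : Type*} [NormedAddCommGroup X] [NormedSpace ℝ X] [CompleteSpace X]
    (f : ℝ → X → X) (ω : ℕ) (hω : 1 ≤ ω) (L : ℝ) (hL : 0 < L) (p : ℝ) (hp : 1 ≤ p)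
    (hfcont : Continuous (fun q : ℝ × X => f q.1 q.2))
    (husap : ∀ K : Set X, Bornology.IsBounded K →
      (∃ C : ℝ, ∀ t : ℝ, 0 ≤ t → ∀ x ∈ K, ‖f t x‖ ≤ C) ∧
      (∀ ε > (0 : ℝ), ∃ T : ℝ, ∀ t ≥ T, ∀ x ∈ K,
        ‖f (t + (ω : ℝ)) x - f t x‖ ≤ ε))
    (hlip : ∀ t : ℝ, 0 ≤ t → ∀ x y : X, ‖f t x - f t y‖ ≤ L * ‖x - y‖)
    (u : ℝ → X)
    (hbdd : ∃ C : ℝ, ∀ t : ℝ, 0 ≤ t → ‖u t‖ ≤ C)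
    (hcont : ContinuousOn u (Set.Ici (0 : ℝ)))
    (hsap : Tendsto (fun t : ℝ => u (t + (ω : ℝ)) - u t) atTop (nhds 0)) :
    Tendsto (fun t : ℝ =>
        ∫ s in t..(t + 1),
          ‖f (s + (ω : ℝ)) (u ((⌊s + (ω : ℝ)⌋ : ℤ) : ℝ)) - f s (u ((⌊s⌋ : ℤ) : ℝ))‖ ^ p)
      atTop (nhds 0) :=
  stmt4_general f ω L p hp husap hlip u hbdd hsap
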